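/- Discrete viscous summation by parts: for periodic grid vector fields u = (u, v) and φ = (φ, ψ), the sum ∑_{i,j} [(∇⁻ₓ∇⁺ₓ u + ∇⁻_y∇⁺_y u + ∇⁻_y∇⁺ₓ v − ∇⁻ₓ∇⁺_y v)_{i,j} φ_{i,j} + (∇⁻ₓ∇⁺_y u + ∇⁻_y∇⁺_y v + ∇⁻ₓ∇⁺ₓ v − ∇⁻_y∇⁺ₓ u)_{i,j} ψ_{i,j}] equals −2 ∑_{i,j} dev(𝔻⁺(u_{i,j})) : ∇⁺φ_{i,j}, where 𝔻⁺(u) = ½(∇⁺u + (∇⁺u)ᵀ) and ∇⁺φ is the 2×2 matrix of forward differences. -/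
import Mathlib

section helpers
variable {M N : ℕ} [NeZero M] [NeZero N]

lemma shiftx' (F : ZMod M × ZMod N → ℝ) :
    ∑ p : ZMod M × ZMod N, F (p.1 - 1, p.2) = ∑ p : ZMod M × ZMod N, F p :=
  Fintype.sum_equiv ((Equiv.addRight (-1 : ZMod M)).prodCongr (Equiv.refl _)) _ _
    (fun p => by cases p; simp [sub_eq_add_neg])

lemma shifty' (F : ZMod M × ZMod N → ℝ) :
    ∑ p : ZMod M × ZMod N, F (p.1, p.2 - 1) = ∑ p : ZMod M × ZMod N, F p :=
  Fintype.sum_equiv ((Equiv.refl _).prodCongr (Equiv.addRight (-1 : ZMod N))) _ _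
    (fun p => by cases p; simp [sub_eq_add_neg])

lemma sbpx (hx : ℝ) (f g : ZMod M × ZMod N → ℝ) :
    ∑ p : ZMod M × ZMod N, (f p - f (p.1 - 1, p.2)) / hx * g p
      = -∑ p : ZMod M × ZMod N, f p * ((g (p.1 + 1, p.2) - g p) / hx) := by
  have key : ∑ p : ZMod M × ZMod N, f (p.1 - 1, p.2) * g p
      = ∑ p : ZMod M × ZMod N, f p * g (p.1 + 1, p.2) := by
    have h := shiftx' (fun p => f p * g (p.1 + 1, p.2))
    simpa using h
  have base : ∑ p : ZMod M × ZMod N, (f p - f (p.1 - 1, p.2)) * g p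
      = -∑ p : ZMod M × ZMod N, f p * (g (p.1 + 1, p.2) - g p) := by
    simp only [sub_mul, mul_sub, Finset.sum_sub_distrib, key]; ring
  calc ∑ p : ZMod M × ZMod N, (f p - f (p.1 - 1, p.2)) / hx * g p
      = ∑ p : ZMod M × ZMod N, ((f p - f (p.1 - 1, p.2)) * g p) / hx :=
        Finset.sum_congr rfl fun p _ => by ring
    _ = (∑ p : ZMod M × ZMod N, (f p - f (p.1 - 1, p.2)) * g p) / hx := by
        rw [← Finset.sum_div]
    _ = (-∑ p : ZMod M × ZMod N, f p * (g (p.1 + 1, p.2) - g p)) / hx := by rw [base]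
    _ = -∑ p : ZMod M × ZMod N, f p * ((g (p.1 + 1, p.2) - g p) / hx) := by
        rw [neg_div, Finset.sum_div]
        exact neg_inj.mpr (Finset.sum_congr rfl fun p _ => by ring)

lemma sbpy (hy : ℝ) (f g : ZMod M × ZMod N → ℝ) :
    ∑ p : ZMod M × ZMod N, (f p - f (p.1, p.2 - 1)) / hy * g p
      = -∑ p : ZMod M × ZMod N, f p * ((g (p.1, p.2 + 1) - g p) / hy) := by
  have key : ∑ p : ZMod M × ZMod N, f (p.1, p.2 - 1) * g p
      = ∑ p : ZMod M × ZMod N, f p * g (p.1, p.2 + 1) := by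
    have h := shifty' (fun p => f p * g (p.1, p.2 + 1))
    simpa using h
  have base : ∑ p : ZMod M × ZMod N, (f p - f (p.1, p.2 - 1)) * g p
      = -∑ p : ZMod M × ZMod N, f p * (g (p.1, p.2 + 1) - g p) := by
    simp only [sub_mul, mul_sub, Finset.sum_sub_distrib, key]; ring
  calc ∑ p : ZMod M × ZMod N, (f p - f (p.1, p.2 - 1)) / hy * g p
      = ∑ p : ZMod M × ZMod N, ((f p - f (p.1, p.2 - 1)) * g p) / hy :=
        Finset.sum_congr rfl fun p _ => by ring
    _ = (∑ p : ZMod M × ZMod N, (f p - f (p.1, p.2 - 1)) * g p) / hy := by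
        rw [← Finset.sum_div]
    _ = (-∑ p : ZMod M × ZMod N, f p * (g (p.1, p.2 + 1) - g p)) / hy := by rw [base]
    _ = -∑ p : ZMod M × ZMod N, f p * ((g (p.1, p.2 + 1) - g p) / hy) := by
        rw [neg_div, Finset.sum_div]
        exact neg_inj.mpr (Finset.sum_congr rfl fun p _ => by ring)
end helpers

/-- Discrete viscous summation by parts for periodic grid vector fields. -/
theorem discrete_viscous_summation_by_parts
    (M N : ℕ) [NeZero M] [NeZero N] (hx hy : ℝ) (hhx : 0 < hx) (hhy : 0 < hy)
    (u v φ ψ : ZMod M × ZMod N → ℝ) :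
    (letI Dpx : (ZMod M × ZMod N → ℝ) → ZMod M × ZMod N → ℝ :=
      fun f p => (f (p.1 + 1, p.2) - f p) / hx
     letI Dmx : (ZMod M × ZMod N → ℝ) → ZMod M × ZMod N → ℝ :=
      fun f p => (f p - f (p.1 - 1, p.2)) / hx
     letI Dpy : (ZMod M × ZMod N → ℝ) → ZMod M × ZMod N → ℝ :=
      fun f p => (f (p.1, p.2 + 1) - f p) / hy
     letI Dmy : (ZMod M × ZMod N → ℝ) → ZMod M × ZMod N → ℝ :=
      fun f p => (f p - f (p.1, p.2 - 1)) / hy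
     -- ∇⁺u as a 2×2 matrix at each grid point
     letI gradu : ZMod M × ZMod N → Matrix (Fin 2) (Fin 2) ℝ :=
      fun p => !![Dpx u p, Dpy u p; Dpx v p, Dpy v p]
     letI gradφ : ZMod M × ZMod N → Matrix (Fin 2) (Fin 2) ℝ :=
      fun p => !![Dpx φ p, Dpy φ p; Dpx ψ p, Dpy ψ p]
     letI D : ZMod M × ZMod N → Matrix (Fin 2) (Fin 2) ℝ :=
      fun p => (1 / 2 : ℝ) • (gradu p + (gradu p).transpose)
     letI dev : Matrix (Fin 2) (Fin 2) ℝ → Matrix (Fin 2) (Fin 2) ℝ :=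
      fun A => A - ((1 / 2 : ℝ) * A.trace) • (1 : Matrix (Fin 2) (Fin 2) ℝ)
     ∑ p : ZMod M × ZMod N,
        ((Dmx (Dpx u) p + Dmy (Dpy u) p + Dmy (Dpx v) p - Dmx (Dpy v) p) * φ p
          + (Dmx (Dpy u) p + Dmy (Dpy v) p + Dmx (Dpx v) p - Dmy (Dpx u) p) * ψ p)
       = -2 * ∑ p : ZMod M × ZMod N, ∑ i, ∑ j, dev (D p) i j * gradφ p i j) := by
  dsimp only
  set a : ZMod M × ZMod N → ℝ := fun p => (u (p.1 + 1, p.2) - u p) / hx with ha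
  set b : ZMod M × ZMod N → ℝ := fun p => (u (p.1, p.2 + 1) - u p) / hy with hb
  set c : ZMod M × ZMod N → ℝ := fun p => (v (p.1 + 1, p.2) - v p) / hx with hc
  set d : ZMod M × ZMod N → ℝ := fun p => (v (p.1, p.2 + 1) - v p) / hy with hd
  trans ((∑ p : ZMod M × ZMod N, (a p - a (p.1 - 1, p.2)) / hx * φ p)
      + (∑ p : ZMod M × ZMod N, (b p - b (p.1, p.2 - 1)) / hy * φ p)
      + (∑ p : ZMod M × ZMod N, (c p - c (p.1, p.2 - 1)) / hy * φ p)
      - (∑ p : ZMod M × ZMod N, (d p - d (p.1 - 1, p.2)) / hx * φ p)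
      + (∑ p : ZMod M × ZMod N, (b p - b (p.1 - 1, p.2)) / hx * ψ p)
      + (∑ p : ZMod M × ZMod N, (d p - d (p.1, p.2 - 1)) / hy * ψ p)
      + (∑ p : ZMod M × ZMod N, (c p - c (p.1 - 1, p.2)) / hx * ψ p)
      - (∑ p : ZMod M × ZMod N, (a p - a (p.1, p.2 - 1)) / hy * ψ p))
  · simp only [← Finset.sum_add_distrib, ← Finset.sum_sub_distrib]
    refine Finset.sum_congr rfl fun p _ => ?_
    simp only [ha, hb, hc, hd]
    ring
  · rw [sbpx hx a φ, sbpy hy b φ, sbpy hy c φ, sbpx hx d φ,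
        sbpx hx b ψ, sbpy hy d ψ, sbpx hx c ψ, sbpy hy a ψ,
        Finset.mul_sum]
    simp only [sub_eq_add_neg, neg_neg, ← Finset.sum_neg_distrib, ← Finset.sum_add_distrib]
    refine Finset.sum_congr rfl fun p _ => ?_
    simp only [ha, hb, hc, hd, Matrix.trace_smul, Matrix.trace_add, Matrix.trace_transpose,
      Matrix.trace_fin_two_of, Matrix.one_fin_two, Matrix.sub_apply, Matrix.smul_apply,
      Matrix.add_apply, Matrix.transpose_apply, Matrix.of_apply, Matrix.cons_val',
      Matrix.cons_val_zero, Matrix.cons_val_one, Matrix.head_cons, Matrix.head_fin_const,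
      Matrix.empty_val', Matrix.cons_val_fin_one, Matrix.neg_apply, smul_eq_mul, Fin.sum_univ_two]
    ring
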